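/- Let D ≥ 16, Q = ln ln D, 0 < ε < 1, and suppose (γ_n) is a sequence of reals with counting bound #{n : |γ_n| ≤ T} ≤ K·(ln D)·T·ln(T+2) for all T ≥ 1, and φ : ℝ → ℂ satisfies |φ(r)| ≤ C_A (Q·dist(r, [a,b]))^{-A} for all r with dist(r,[a,b]) ≥ Q^{-1+ε} and every A ≥ 3. Then ∑_{dist(γ_n, [a,b]) ≥ Q^{-1+ε}} |φ(γ_n)| ≤ C'·(ln D)·Q^{-2}, with C' depending only on K, the C_A, a, b, ε. -/

import Mathlib

/-!
Split the terms with `dist(γ_n, [a,b]) ≥ δ = Q^{-1+ε}` into the dyadic shells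
`δ 2^k ≤ dist(γ_n, [a,b]) < δ 2^{k+1}`. Taking `A ≥ max(3, 2/ε)` in the decay bound, every
term of the `k`-th shell is `≪ Q^{-εA} 2^{-kA} ≤ Q^{-2} 8^{-k}`, while the shell lies in
`|γ_n| ≤ max(|a|,|b|) + 2^{k+1}` (as `δ ≤ 1`) and so has `≪ (ln D) 4^k` elements by the
counting bound. The shells thus contribute `≪ (ln D) Q^{-2} 2^{-k}`, a geometric series.
-/

open Real Set Metric
open scoped ENNReal

lemma abs_le_max_abs_add_infDist_Icc {a b : ℝ} (hab : a ≤ b) (x : ℝ) :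
    |x| ≤ max |a| |b| + infDist x (Icc a b) := by
  have key : |x| - max |a| |b| ≤ infDist x (Icc a b) := by
    refine (le_infDist (nonempty_Icc.2 hab)).2 fun y hy => ?_
    have : |y| ≤ max |a| |b| := abs_le_max_abs_abs hy.1 hy.2
    linarith [abs_sub_abs_le_abs_sub x y, Real.dist_eq x y]
  linarith

lemma one_le_log_log {D : ℝ} (hD : 16 ≤ D) : 1 ≤ log (log D) := by
  have h16 : exp 1 ≤ log 16 := by
    rw [show (16 : ℝ) = 2 ^ 4 by norm_num, Real.log_pow]
    push_cast
    linarith [exp_one_lt_d9, log_two_gt_d9]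
  rw [← log_exp 1]
  exact log_le_log (exp_pos 1) (h16.trans (log_le_log (by norm_num) hD))

lemma log_add_two_le_two_mul {T : ℝ} (hT : 1 ≤ T) : log (T + 2) ≤ 2 * T := by
  linarith [log_le_sub_one_of_pos (by linarith : (0 : ℝ) < T + 2)]

lemma one_le_add_two_pow_succ {M : ℝ} (hM : 0 ≤ M) (k : ℕ) : 1 ≤ M + 2 ^ (k + 1) := by
  linarith [one_le_pow₀ (M₀ := ℝ) one_le_two (n := k + 1)]

lemma add_two_pow_succ_sq_mul_inv_le {M : ℝ} (hM : 0 ≤ M) (k : ℕ) :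
    (M + 2 ^ (k + 1)) ^ 2 * ((2 ^ k) ^ 3)⁻¹ ≤ (M + 2) ^ 2 * 2⁻¹ ^ k := by
  have h1 : (1 : ℝ) ≤ 2 ^ k := one_le_pow₀ one_le_two
  have hT : M + 2 ^ (k + 1) ≤ (M + 2) * 2 ^ k := by rw [pow_succ]; nlinarith
  calc _ ≤ ((M + 2) * 2 ^ k) ^ 2 * ((2 ^ k) ^ 3)⁻¹ := by gcongr
    _ = (M + 2) ^ 2 * 2⁻¹ ^ k := by rw [inv_pow]; field_simp

lemma mul_inv_two_pow_cube_le_of_le_mul_log {N K L M c : ℝ} (hKL : 0 ≤ K * L) (hM : 0 ≤ M) (hc : 0 ≤ c)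
    (k : ℕ) (hN : N ≤ K * L * (M + 2 ^ (k + 1)) * log (M + 2 ^ (k + 1) + 2)) :
    N * (c * ((2 ^ k) ^ 3)⁻¹) ≤ 2 * K * L * (M + 2) ^ 2 * c * 2⁻¹ ^ k := by
  set T := M + 2 ^ (k + 1)
  have hT : 1 ≤ T := one_le_add_two_pow_succ hM k
  have hN' : N ≤ 2 * K * L * T ^ 2 := by
    refine hN.trans ?_
    have := mul_le_mul_of_nonneg_left (log_add_two_le_two_mul hT)
      (mul_nonneg hKL (by linarith) : 0 ≤ K * L * T)
    linarith
  calc N * (c * ((2 ^ k) ^ 3)⁻¹) ≤ 2 * K * L * T ^ 2 * (c * ((2 ^ k) ^ 3)⁻¹) := by gcongr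
    _ = 2 * (K * L) * c * (T ^ 2 * ((2 ^ k) ^ 3)⁻¹) := by ring
    _ ≤ 2 * (K * L) * c * ((M + 2) ^ 2 * 2⁻¹ ^ k) :=
        mul_le_mul_of_nonneg_left (add_two_pow_succ_sq_mul_inv_le hM k)
          (mul_nonneg (mul_nonneg zero_le_two hKL) hc)
    _ = 2 * K * L * (M + 2) ^ 2 * c * 2⁻¹ ^ k := by ring

lemma mul_rpow_neg_le {Q x t ε A : ℝ} (hQ : 1 ≤ Q) (hx : 1 ≤ x) (hA : 3 ≤ A) (hεA : 2 ≤ ε * A)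
    (ht : Q ^ (-1 + ε) * x ≤ t) : (Q * t) ^ (-A) ≤ Q ^ (-2 : ℝ) * (x ^ 3)⁻¹ := by
  have hQ0 : 0 < Q := by linarith
  have hQt : Q ^ ε * x ≤ Q * t := by
    calc Q ^ ε * x = Q * (Q ^ (-1 + ε) * x) := by
          rw [← mul_assoc, mul_comm Q, ← rpow_add_one hQ0.ne']; norm_num
      _ ≤ Q * t := mul_le_mul_of_nonneg_left ht hQ0.le
  calc (Q * t) ^ (-A) ≤ (Q ^ ε * x) ^ (-A) :=
        rpow_le_rpow_of_nonpos (by positivity) hQt (by linarith)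
    _ = Q ^ (-(ε * A)) * x ^ (-A) := by
        rw [mul_rpow (by positivity) (by linarith), ← rpow_mul hQ0.le, mul_neg]
    _ ≤ Q ^ (-2 : ℝ) * x ^ (-(3 : ℝ)) := by gcongr
    _ = Q ^ (-2 : ℝ) * (x ^ 3)⁻¹ := by
        rw [rpow_neg (by linarith), ← rpow_natCast]; norm_num

lemma norm_le_of_rpow_decay {X E : Type*} [PseudoMetricSpace X] [SeminormedAddGroup E]
    {φ : X → E} {s : Set X} {Q ε A C x : ℝ} (hQ : 1 ≤ Q) (hA : 3 ≤ A) (hεA : 2 ≤ ε * A)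
    (hC : 0 ≤ C) (hφ : ∀ r, Q ^ (-1 + ε) ≤ infDist r s → ‖φ r‖ ≤ C * (Q * infDist r s) ^ (-A))
    (hx : 1 ≤ x) {r : X} (hr : Q ^ (-1 + ε) * x ≤ infDist r s) :
    ‖φ r‖ ≤ C * Q ^ (-2 : ℝ) * (x ^ 3)⁻¹ := by
  have hδ : Q ^ (-1 + ε) ≤ infDist r s :=
    (le_mul_of_one_le_right (rpow_nonneg (by linarith) _) hx).trans hr
  rw [mul_assoc]
  exact (hφ r hδ).trans (mul_le_mul_of_nonneg_left (mul_rpow_neg_le hQ hx hA hεA hr) hC)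

section DyadicShells

variable {ι : Type*}

def dyadicShell (d : ι → ℝ) (δ : ℝ) (k : ℕ) : Set ι :=
  {i | δ * 2 ^ k ≤ d i ∧ d i < δ * 2 ^ (k + 1)}

lemma exists_mem_dyadicShell {d : ι → ℝ} {δ : ℝ} (hδ : 0 < δ) {i : ι} (hi : δ ≤ d i) :
    ∃ k, i ∈ dyadicShell d δ k := by
  obtain ⟨k, hk, hk'⟩ := exists_nat_pow_near ((one_le_div hδ).2 hi) one_lt_two
  exact ⟨k, by rwa [le_div_iff₀' hδ] at hk, by rwa [div_lt_iff₀' hδ] at hk'⟩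

lemma le_of_mem_dyadicShell {d : ι → ℝ} {δ : ℝ} (hδ : 0 ≤ δ) {k : ℕ} {i : ι}
    (hi : i ∈ dyadicShell d δ k) : δ ≤ d i :=
  (le_mul_of_one_le_right hδ (one_le_pow₀ one_le_two)).trans hi.1

lemma dyadicShell_infDist_Icc_subset {a b δ : ℝ} (hab : a ≤ b) (hδ : δ ≤ 1) (γ : ι → ℝ) (k : ℕ) :
    dyadicShell (fun i => infDist (γ i) (Icc a b)) δ k ⊆ {i | |γ i| ≤ max |a| |b| + 2 ^ (k + 1)} :=
  fun i hi => by
    simp only [dyadicShell, mem_ofPred_eq] at hi ⊢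
    have h2k : δ * 2 ^ (k + 1) ≤ 2 ^ (k + 1) := mul_le_of_le_one_left (by positivity) hδ
    linarith [abs_le_max_abs_add_infDist_Icc hab (γ i), hi.2]

lemma ENNReal.tsum_le_tsum_dyadicShell {d : ι → ℝ} {δ : ℝ} (hδ : 0 < δ) (f : ι → ℝ≥0∞)
    (hf : ∀ i, d i < δ → f i = 0) :
    ∑' i, f i ≤ ∑' k, ∑' i, (dyadicShell d δ k).indicator f i := by
  rw [ENNReal.tsum_comm]
  refine ENNReal.tsum_le_tsum fun i => ?_
  by_cases hi : δ ≤ d i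
  · obtain ⟨k, hk⟩ := exists_mem_dyadicShell hδ hi
    exact (indicator_of_mem hk f).symm.le.trans (ENNReal.le_tsum k)
  · simp [hf i (not_le.1 hi)]

lemma ENNReal.tsum_indicator_le_natCard_mul {s t : Set ι} (ht : t.Finite) (hst : s ⊆ t)
    {f : ι → ℝ≥0∞} {c : ℝ≥0∞} (hf : ∀ i ∈ s, f i ≤ c) :
    ∑' i, s.indicator f i ≤ Nat.card t * c := by
  have : Finite t := ht
  calc ∑' i, s.indicator f i ≤ ∑' i, t.indicator (fun _ => c) i :=
        ENNReal.tsum_le_tsum fun i => by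
          by_cases hi : i ∈ s
          · simpa [hi, hst hi] using hf i hi
          · simp [hi]
    _ = Nat.card t * c := by
        rw [← tsum_subtype, ENNReal.tsum_const, ENat.card_eq_coe_natCard]; rfl

lemma tsum_le_of_dyadicShell_bounds {f : ι → ℝ} (hf : 0 ≤ f) {d : ι → ℝ} {δ : ℝ} (hδ : 0 < δ)
    (hfδ : ∀ i, d i < δ → f i = 0) {β : ℝ} (hβ : 0 ≤ β) {S : ℕ → Set ι} {c : ℕ → ℝ}
    (hS : ∀ k, (S k).Finite) (hshell : ∀ k, dyadicShell d δ k ⊆ S k)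
    (hc : ∀ k, ∀ i ∈ dyadicShell d δ k, f i ≤ c k)
    (hcard : ∀ k, Nat.card (S k) * c k ≤ β * 2⁻¹ ^ k) :
    ∑' i, f i ≤ 2 * β := by
  have key : ∑' i, ENNReal.ofReal (f i) ≤ ENNReal.ofReal (2 * β) := by
    calc ∑' i, ENNReal.ofReal (f i)
        ≤ ∑' k, ∑' i, (dyadicShell d δ k).indicator (fun i => ENNReal.ofReal (f i)) i :=
          ENNReal.tsum_le_tsum_dyadicShell hδ _ fun i hi => by simp [hfδ i hi]
      _ ≤ ∑' k, ENNReal.ofReal β * 2⁻¹ ^ k := ENNReal.tsum_le_tsum fun k => by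
          refine (ENNReal.tsum_indicator_le_natCard_mul (hS k) (hshell k)
            fun i hi => ENNReal.ofReal_le_ofReal (hc k i hi)).trans ?_
          rw [← ENNReal.ofReal_natCast, ← ENNReal.ofReal_mul (by positivity)]
          refine (ENNReal.ofReal_le_ofReal (hcard k)).trans_eq ?_
          rw [ENNReal.ofReal_mul hβ, ENNReal.ofReal_pow (by norm_num),
            ENNReal.ofReal_inv_of_pos two_pos]
          simp
      _ = ENNReal.ofReal (2 * β) := by
          rw [ENNReal.tsum_mul_left, ENNReal.tsum_geometric, ENNReal.one_sub_inv_two, inv_inv,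
            ENNReal.ofReal_mul zero_le_two, mul_comm]
          simp
  have := ENNReal.toReal_le_of_le_ofReal (by positivity) key
  rwa [ENNReal.tsum_toReal_eq (fun _ => ENNReal.ofReal_ne_top),
    tsum_congr fun i => ENNReal.toReal_ofReal (hf i)] at this

end DyadicShells

/-- Tail estimate for the smoothed counting sum: with `D ≥ 16`, `Q = ln ln D`,
`0 < ε < 1`, a sequence `(γ_n)` satisfying the counting bound
`#{n : |γ_n| ≤ T} ≤ K (ln D) T ln(T+2)` for `T ≥ 1`, and `φ` satisfying
`|φ(r)| ≤ C_A (Q·dist(r,[a,b]))^{-A}` for all `A ≥ 3` whenever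
`dist(r,[a,b]) ≥ Q^{-1+ε}`, one has
`∑_{dist(γ_n,[a,b]) ≥ Q^{-1+ε}} |φ(γ_n)| ≤ C' (ln D) Q^{-2}`, with `C'` depending only
on `K`, the `C_A`, `a`, `b`, `ε`. -/
theorem stmt_18 (K : ℝ) (hK : 0 < K) (Cf : ℝ → ℝ) (a b : ℝ) (hab : a ≤ b)
    (ε : ℝ) (hε₀ : 0 < ε) (hε₁ : ε < 1) :
    ∃ C' : ℝ, 0 < C' ∧
      ∀ (D : ℝ), 16 ≤ D → ∀ Q : ℝ, Q = Real.log (Real.log D) →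
        ∀ (γ : ℕ → ℝ) (φ : ℝ → ℂ),
          (∀ T : ℝ, 1 ≤ T → {n : ℕ | |γ n| ≤ T}.Finite ∧
            (Nat.card {n : ℕ | |γ n| ≤ T} : ℝ) ≤ K * Real.log D * T * Real.log (T + 2)) →
          (∀ A : ℝ, 3 ≤ A → ∀ r : ℝ, Q ^ (-1 + ε) ≤ Metric.infDist r (Icc a b) →
            ‖φ r‖ ≤ Cf A * (Q * Metric.infDist r (Icc a b)) ^ (-A)) →
          (∑' n : ℕ,
              if Q ^ (-1 + ε) ≤ Metric.infDist (γ n) (Icc a b) then ‖φ (γ n)‖ else 0) ≤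
            C' * Real.log D * Q ^ (-2 : ℝ) := by
  obtain ⟨A, hA3, hεA⟩ : ∃ A : ℝ, 3 ≤ A ∧ 2 ≤ ε * A :=
    ⟨max 3 (2 / ε), le_max_left _ _, (div_le_iff₀' hε₀).1 (le_max_right _ _)⟩
  set M := max |a| |b|
  set C := max (Cf A) 1
  have hM : 0 ≤ M := (abs_nonneg a).trans (le_max_left _ _)
  refine ⟨4 * K * C * (M + 2) ^ 2, by positivity, ?_⟩
  rintro D hD Q rfl γ φ hcount hφ
  set Q := log (log D)
  have hQ : 1 ≤ Q := one_le_log_log hD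
  have hδ0 : 0 < Q ^ (-1 + ε) := rpow_pos_of_pos (by linarith) _
  have hδ1 : Q ^ (-1 + ε) ≤ 1 := rpow_le_one_of_one_le_of_nonpos hQ (by linarith)
  have hlogD : 0 < log D := log_pos (by linarith)
  have hφA : ∀ r, Q ^ (-1 + ε) ≤ infDist r (Icc a b) →
      ‖φ r‖ ≤ C * (Q * infDist r (Icc a b)) ^ (-A) := fun r hr =>
    (hφ A hA3 r hr).trans (mul_le_mul_of_nonneg_right (le_max_left _ _)
      (rpow_nonneg (mul_nonneg (by linarith) infDist_nonneg) _))
  calc _ ≤ 2 * (2 * K * log D * (M + 2) ^ 2 * (C * Q ^ (-2 : ℝ))) :=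
        tsum_le_of_dyadicShell_bounds (fun n => by dsimp only; split_ifs <;> positivity) hδ0
          (fun n hn => if_neg hn.not_ge) (by positivity)
          (fun k => (hcount _ (one_le_add_two_pow_succ hM k)).1)
          (dyadicShell_infDist_Icc_subset hab hδ1 γ)
          (fun k n hn => by
            rw [if_pos (le_of_mem_dyadicShell hδ0.le hn)]
            exact norm_le_of_rpow_decay hQ hA3 hεA (by positivity) hφA
              (one_le_pow₀ one_le_two) hn.1)
          (fun k => mul_inv_two_pow_cube_le_of_le_mul_log (mul_pos hK hlogD).le hM
            (by positivity) k (hcount _ (one_le_add_two_pow_succ hM k)).2)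
    _ = 4 * K * C * (M + 2) ^ 2 * log D * Q ^ (-2 : ℝ) := by ring
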